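/- arXiv:2102.05522 — 8 statements merged into one kernel-verified Lean document; each statement's English description precedes it below -/
import Mathlib

section
/- Let G be a finite simple graph with minimum degree δ(G) > |G|/2 and let I be an independent set of maximum size in G. Then for any two distinct vertices u, v ∈ I, the common neighbourhood of u and v contains an edge of G. -/
/-- If `G` has minimum degree greater than `|G|/2` and `I` is an independent
set of maximum size, then any two distinct vertices of `I` form a dense pair: their common
neighbourhood contains an edge of `G`. -/
theorem stmt_1 {V : Type*} [Fintype V] (G : SimpleGraph V) [DecidableRel G.Adj]
    (hδ : 2 * G.minDegree > Fintype.card V)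
    (I : Finset V) (hind : ∀ x ∈ I, ∀ y ∈ I, x ≠ y → ¬ G.Adj x y)
    (hmax : ∀ J : Finset V, (∀ x ∈ J, ∀ y ∈ J, x ≠ y → ¬ G.Adj x y) → J.card ≤ I.card)
    (u v : V) (hu : u ∈ I) (hv : v ∈ I) (huv : u ≠ v) :
    ∃ x y, G.Adj u x ∧ G.Adj v x ∧ G.Adj u y ∧ G.Adj v y ∧ G.Adj x y := by
  classical
  by_contra hcon
  push_neg at hcon
  set W : Finset V := G.neighborFinset u ∩ G.neighborFinset v with hW
  -- W is independent
  have hWind : ∀ x ∈ W, ∀ y ∈ W, x ≠ y → ¬ G.Adj x y := by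
    intro x hx y hy _ hadj
    rw [hW, Finset.mem_inter, SimpleGraph.mem_neighborFinset,
      SimpleGraph.mem_neighborFinset] at hx hy
    exact hcon x y hx.1 hx.2 hy.1 hy.2 hadj
  have hWcard : W.card ≤ I.card := hmax W hWind
  -- neighbors of u and v avoid I
  have hsub : G.neighborFinset u ∪ G.neighborFinset v ⊆ Finset.univ \ I := by
    intro x hx
    rw [Finset.mem_union, SimpleGraph.mem_neighborFinset,
      SimpleGraph.mem_neighborFinset] at hx
    rw [Finset.mem_sdiff]
    refine ⟨Finset.mem_univ _, fun hxI => ?_⟩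
    rcases hx with h | h
    · exact hind u hu x hxI (fun he => G.irrefl (he ▸ h)) h
    · exact hind v hv x hxI (fun he => G.irrefl (he ▸ h)) h
  have hunion : (G.neighborFinset u ∪ G.neighborFinset v).card ≤
      Fintype.card V - I.card := by
    calc (G.neighborFinset u ∪ G.neighborFinset v).card
        ≤ (Finset.univ \ I).card := Finset.card_le_card hsub
      _ = Fintype.card V - I.card := by
          rw [Finset.card_sdiff_of_subset (Finset.subset_univ I), Finset.card_univ]
  have hkey : (G.neighborFinset u ∪ G.neighborFinset v).card + W.card =
      G.degree u + G.degree v := by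
    rw [hW, Finset.card_union_add_card_inter]
    rfl
  have hdu : G.minDegree ≤ G.degree u := G.minDegree_le_degree u
  have hdv : G.minDegree ≤ G.degree v := G.minDegree_le_degree v
  have hIle : I.card ≤ Fintype.card V := Finset.card_le_univ I
  omega
end

section
/- Let G be a finite simple graph with minimum degree δ(G) > |G|/2 and suppose v₁v₂v₃v₄ is an induced 4-cycle in G (so v₁v₃ and v₂v₄ are non-edges). Then at least one of the pairs {v₁,v₃}, {v₂,v₄} has a common neighbourhood containing an edge of G. -/
/-- If `G` has minimum degree greater than `|G|/2` and `v₁v₂v₃v₄` is an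
induced 4-cycle, then at least one of the non-edge pairs `{v₁,v₃}`, `{v₂,v₄}` is dense:
its common neighbourhood contains an edge of `G`. -/
theorem stmt_2 {V : Type*} [Fintype V] (G : SimpleGraph V) [DecidableRel G.Adj]
    (hδ : 2 * G.minDegree > Fintype.card V)
    (v₁ v₂ v₃ v₄ : V) (h12 : G.Adj v₁ v₂) (h23 : G.Adj v₂ v₃) (h34 : G.Adj v₃ v₄)
    (h41 : G.Adj v₄ v₁) (hne13 : v₁ ≠ v₃) (hne24 : v₂ ≠ v₄)
    (h13 : ¬ G.Adj v₁ v₃) (h24 : ¬ G.Adj v₂ v₄) :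
    (∃ x y, G.Adj v₁ x ∧ G.Adj v₃ x ∧ G.Adj v₁ y ∧ G.Adj v₃ y ∧ G.Adj x y) ∨
    (∃ x y, G.Adj v₂ x ∧ G.Adj v₄ x ∧ G.Adj v₂ y ∧ G.Adj v₄ y ∧ G.Adj x y) := by
  classical
  by_contra hcon
  push_neg at hcon
  obtain ⟨hA, hB⟩ := hcon
  set N1 := G.neighborFinset v₁ with hN1
  set N2 := G.neighborFinset v₂ with hN2
  set N3 := G.neighborFinset v₃ with hN3
  set N4 := G.neighborFinset v₄ with hN4
  -- N(v₁) ∪ N(v₃) avoids B = N(v₂) ∩ N(v₄)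
  have hsub1 : N1 ∪ N3 ⊆ (N2 ∩ N4)ᶜ := by
    intro w hw
    simp only [hN1, hN2, hN3, hN4, Finset.mem_union, Finset.mem_compl, Finset.mem_inter,
      SimpleGraph.mem_neighborFinset] at *
    rintro ⟨hw2, hw4⟩
    rcases hw with h1 | h3
    · exact hB w v₁ hw2 hw4 h12.symm h41 h1.symm
    · exact hB w v₃ hw2 hw4 h23 h34.symm h3.symm
  -- N(v₂) ∪ N(v₄) avoids A = N(v₁) ∩ N(v₃)
  have hsub2 : N2 ∪ N4 ⊆ (N1 ∩ N3)ᶜ := by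
    intro w hw
    simp only [hN1, hN2, hN3, hN4, Finset.mem_union, Finset.mem_compl, Finset.mem_inter,
      SimpleGraph.mem_neighborFinset] at *
    rintro ⟨hw1, hw3⟩
    rcases hw with h2 | h4
    · exact hA w v₂ hw1 hw3 h12 h23.symm h2.symm
    · exact hA w v₄ hw1 hw3 h41.symm h34 h4.symm
  have c1 : (N1 ∪ N3).card + (N1 ∩ N3).card = G.degree v₁ + G.degree v₃ := by
    rw [Finset.card_union_add_card_inter]
    simp [hN1, hN3, SimpleGraph.card_neighborFinset_eq_degree]
  have c2 : (N2 ∪ N4).card + (N2 ∩ N4).card = G.degree v₂ + G.degree v₄ := by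
    rw [Finset.card_union_add_card_inter]
    simp [hN2, hN4, SimpleGraph.card_neighborFinset_eq_degree]
  have b1 : (N1 ∪ N3).card ≤ Fintype.card V - (N2 ∩ N4).card := by
    calc (N1 ∪ N3).card ≤ (N2 ∩ N4)ᶜ.card := Finset.card_le_card hsub1
    _ = Fintype.card V - (N2 ∩ N4).card := Finset.card_compl _
  have b2 : (N2 ∪ N4).card ≤ Fintype.card V - (N1 ∩ N3).card := by
    calc (N2 ∪ N4).card ≤ (N1 ∩ N3)ᶜ.card := Finset.card_le_card hsub2
    _ = Fintype.card V - (N1 ∩ N3).card := Finset.card_compl _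
  have hd1 := G.minDegree_le_degree v₁
  have hd2 := G.minDegree_le_degree v₂
  have hd3 := G.minDegree_le_degree v₃
  have hd4 := G.minDegree_le_degree v₄
  have hle1 : (N2 ∩ N4).card ≤ Fintype.card V := Finset.card_le_univ _
  have hle2 : (N1 ∩ N3).card ≤ Fintype.card V := Finset.card_le_univ _
  omega
end

section
/- Let b, s be positive integers and γ a real with b + γ > s. Let G be a finite simple graph with δ(G) > (1 − 1/(b+γ))·|G|, let X be a set of s vertices, and let G_X be the subgraph of G induced on the common neighbourhood Γ(X). Then δ(G_X) > (1 − 1/(b − s + γ))·|G_X|. -/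
/-- second part of the lifting lemma. If `b + γ > s` and
`δ(G) > (1 − 1/(b+γ))·|G|`, then for any set `X` of `s` vertices, the induced subgraph
`G_X` on the common neighbourhood of `X` satisfies `δ(G_X) > (1 − 1/(b−s+γ))·|G_X|`. -/
theorem stmt_4 {V : Type*} [Fintype V] (G : SimpleGraph V) [hdec : DecidableRel G.Adj]
    (b s : ℕ) (hb : 0 < b) (hs : 0 < s) (γ : ℝ) (hγ : (s : ℝ) < (b : ℝ) + γ)
    (hδ : (1 - 1 / ((b : ℝ) + γ)) * (Fintype.card V : ℝ) < (G.minDegree : ℝ))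
    (X : Finset V) (hX : X.card = s)
    (N : Finset V) (hN : N = Finset.univ.filter (fun v => ∀ u ∈ X, G.Adj u v)) :
    (1 - 1 / ((b : ℝ) - (s : ℝ) + γ)) * (N.card : ℝ) <
      ((@SimpleGraph.minDegree _ (G.induce (↑N : Set V)) (FinsetCoe.fintype N)
        (fun a b => hdec a.1 b.1) : ℕ) : ℝ) := by
  classical
  set c : ℝ := (b : ℝ) + γ with hc
  have hc0 : (0 : ℝ) < c := lt_of_le_of_lt (by positivity) hγ
  have hcs : (0 : ℝ) < c - s := by linarith
  -- V is nonempty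
  have hV : Nonempty V := by
    by_contra h
    rw [not_nonempty_iff] at h
    have h0 : Fintype.card V = 0 := Fintype.card_eq_zero
    have h1 : G.minDegree = 0 := by
      simp [SimpleGraph.minDegree, Finset.univ_eq_empty]
    rw [h0, h1] at hδ
    simp at hδ
  obtain ⟨w⟩ := hV
  have hdn : G.minDegree < Fintype.card V :=
    lt_of_le_of_lt (G.minDegree_le_degree w) (G.degree_lt_card_verts w)
  -- lower bound on N.card
  have hcompl : Finset.univ \ N ⊆ X.biUnion (fun u => Finset.univ \ G.neighborFinset u) := by
    intro v hv
    rw [Finset.mem_sdiff] at hv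
    have hv2 : ¬ ∀ u ∈ X, G.Adj u v := by
      intro hall
      exact hv.2 (by rw [hN]; simpa using hall)
    push_neg at hv2
    obtain ⟨u, hu, hadj⟩ := hv2
    exact Finset.mem_biUnion.mpr ⟨u, hu, by simp [hadj]⟩
  have hcard1 : (Finset.univ \ N).card ≤ s * (Fintype.card V - G.minDegree) := by
    calc (Finset.univ \ N).card ≤ ∑ u ∈ X, (Finset.univ \ G.neighborFinset u).card :=
          le_trans (Finset.card_le_card hcompl) (Finset.card_biUnion_le)
      _ ≤ ∑ _u ∈ X, (Fintype.card V - G.minDegree) := by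
          apply Finset.sum_le_sum
          intro u _
          rw [Finset.card_sdiff_of_subset (Finset.subset_univ _), Finset.card_univ]
          exact Nat.sub_le_sub_left (G.minDegree_le_degree u) _
      _ = s * (Fintype.card V - G.minDegree) := by rw [Finset.sum_const, hX, smul_eq_mul]
  have hcard2 : (Finset.univ \ N).card + N.card = Fintype.card V := by
    rw [Finset.card_sdiff_add_card_eq_card (Finset.subset_univ N), Finset.card_univ]
  set n : ℝ := (Fintype.card V : ℝ) with hn
  set D : ℝ := (G.minDegree : ℝ) with hD
  have hDn : D < n := by rw [hD, hn]; exact_mod_cast hdn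
  have hm : n - (s : ℝ) * (n - D) ≤ (N.card : ℝ) := by
    have h1 : ((Finset.univ \ N).card : ℝ) ≤ (s : ℝ) * (n - D) := by
      have := (Nat.cast_le (α := ℝ)).mpr hcard1
      rwa [Nat.cast_mul, Nat.cast_sub hdn.le] at this
    have h2 : ((Finset.univ \ N).card : ℝ) + (N.card : ℝ) = n := by rw [hn]; exact_mod_cast hcard2
    linarith
  have h1 : c * (n - D) < n := by
    have h := mul_lt_mul_of_pos_right hδ hc0
    have he : (1 - 1 / c) * n * c = c * n - n := by field_simp
    rw [he] at h
    nlinarith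
  have h2 : (c - s) * (n - D) < (N.card : ℝ) := by nlinarith
  have hNpos : 0 < N.card := by
    have : (0 : ℝ) < (N.card : ℝ) := lt_of_le_of_lt (mul_nonneg hcs.le (by linarith)) h2
    exact_mod_cast this
  obtain ⟨x, hx⟩ := Finset.card_pos.mp hNpos
  haveI hNE : Nonempty (↑N : Set V) := ⟨⟨x, Finset.mem_coe.mpr hx⟩⟩
  -- minimal degree vertex in induced graph
  obtain ⟨v₀, hv₀⟩ := @SimpleGraph.exists_minimal_degree_vertex _ (G.induce (↑N : Set V))
    (FinsetCoe.fintype N) (fun a b => hdec a.1 b.1) hNE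
  -- compute the degree in the induced graph
  have key : ∀ (inst : Fintype ((G.induce (↑N : Set V)).neighborSet v₀)),
      @SimpleGraph.degree _ (G.induce (↑N : Set V)) v₀ inst
        = (N.filter (fun u => G.Adj (↑v₀ : V) u)).card := by
    intro inst
    rw [← @SimpleGraph.card_neighborSet_eq_degree _ (G.induce (↑N : Set V)) v₀ inst]
    have e : ((G.induce (↑N : Set V)).neighborSet v₀) ≃ {u : V // u ∈ N ∧ G.Adj (↑v₀ : V) u} :=
      { toFun := fun y => ⟨y.1.1, Finset.mem_coe.mp y.1.2, y.2⟩
        invFun := fun u => ⟨⟨u.1, Finset.mem_coe.mpr u.2.1⟩, u.2.2⟩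
        left_inv := fun y => rfl
        right_inv := fun u => rfl }
    rw [Fintype.card_congr e, Fintype.card_subtype]
    congr 1
    ext u
    simp [and_comm]
  -- the degree bound
  have hbound : G.degree (↑v₀ : V) + N.card
      ≤ (N.filter (fun u => G.Adj (↑v₀ : V) u)).card + Fintype.card V := by
    have hinter : G.neighborFinset (↑v₀ : V) ∩ N = N.filter (fun u => G.Adj (↑v₀ : V) u) := by
      ext u; simp [and_comm]
    have := Finset.card_union_add_card_inter (G.neighborFinset (↑v₀ : V)) N
    have hun : (G.neighborFinset (↑v₀ : V) ∪ N).card ≤ Fintype.card V := by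
      rw [← Finset.card_univ]; exact Finset.card_le_card (Finset.subset_univ _)
    rw [hinter] at this
    have hdeq : G.degree (↑v₀ : V) = (G.neighborFinset (↑v₀ : V)).card := rfl
    omega
  -- assemble
  have hv₀' : (@SimpleGraph.minDegree _ (G.induce (↑N : Set V)) (FinsetCoe.fintype N)
      (fun a b => hdec a.1 b.1) : ℝ) = ((N.filter (fun u => G.Adj (↑v₀ : V) u)).card : ℝ) := by
    rw [hv₀, key]
  have hfinal : D + (N.card : ℝ) ≤ ((N.filter (fun u => G.Adj (↑v₀ : V) u)).card : ℝ) + n := by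
    have hd1 : D ≤ (G.degree (↑v₀ : V) : ℝ) := by
      rw [hD]; exact_mod_cast G.minDegree_le_degree (↑v₀ : V)
    have hb1 : (G.degree (↑v₀ : V) : ℝ) + (N.card : ℝ)
        ≤ ((N.filter (fun u => G.Adj (↑v₀ : V) u)).card : ℝ) + n := by
      rw [hn]; exact_mod_cast hbound
    linarith
  rw [hv₀']
  have h3 : n - D < (N.card : ℝ) / (c - s) := (lt_div_iff₀ hcs).mpr (by nlinarith)
  have he2 : (1 - 1 / (c - s)) * (N.card : ℝ) = (N.card : ℝ) - (N.card : ℝ) / (c - s) := by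
    field_simp
  have hgoal : (1 - 1 / ((b : ℝ) - (s : ℝ) + γ)) = (1 - 1 / (c - s)) := by
    rw [hc]; ring_nf
  rw [hgoal, he2]
  linarith
end

section
/- Let G be a locally b-partite graph (b ≥ 2) with δ(G) > (2b/(2b+3))·|G|. Then for every vertex v of G, the set D_v = {u : the pair u,v is b-dense} is an independent set. -/
/-- A pair of vertices `u, v` is *b-dense* if the induced subgraph on their common
neighbourhood contains a clique on `b` vertices. -/
def BDense {V : Type*} (G : SimpleGraph V) (b : ℕ) (u v : V) : Prop :=
  ∃ s : Finset V, G.IsNClique b s ∧ ∀ x ∈ s, G.Adj u x ∧ G.Adj v x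

/-- Let `G` be a locally `b`-partite graph (`b ≥ 2`) with
`δ(G) > (2b/(2b+3))·|G|`. Then for every vertex `v`, the set of vertices forming a
`b`-dense pair with `v` is an independent set. -/
theorem stmt_7 {V : Type*} [Fintype V] (G : SimpleGraph V) [DecidableRel G.Adj]
    (b : ℕ) (hb : 2 ≤ b)
    (hloc : ∀ x : V, (G.induce (G.neighborSet x)).Colorable b)
    (hδ : ((2 * b : ℝ) / (2 * b + 3)) * (Fintype.card V : ℝ) < (G.minDegree : ℝ))
    (v : V) :
    ∀ u₁ u₂, BDense G b u₁ v → BDense G b u₂ v → ¬ G.Adj u₁ u₂ := by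
  classical
  intro u₁ u₂ h1 h2 hadj
  obtain ⟨s₁, hc₁, ha₁⟩ := h1
  obtain ⟨s₂, hc₂, ha₂⟩ := h2
  have hu₁s₁ : u₁ ∉ s₁ := fun h => G.loopless.irrefl u₁ ((ha₁ u₁ h).1)
  have hvs₁ : v ∉ s₁ := fun h => G.loopless.irrefl v ((ha₁ v h).2)
  have hu₂s₂ : u₂ ∉ s₂ := fun h => G.loopless.irrefl u₂ ((ha₂ u₂ h).1)
  have hvs₂ : v ∉ s₂ := fun h => G.loopless.irrefl v ((ha₂ v h).2)
  -- Key pointwise claim: every vertex z misses at least 3 of the multiset s₁ ⊔ s₂ ⊔ {u₁,u₂,v}.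
  have key : ∀ z : V,
      3 ≤ (∑ w ∈ s₁, if G.Adj z w then 0 else 1) + (∑ w ∈ s₂, if G.Adj z w then 0 else 1)
        + ((if G.Adj z u₁ then 0 else 1) + (if G.Adj z u₂ then 0 else 1)
        + (if G.Adj z v then 0 else 1)) := by
    intro z
    by_contra hlt
    push_neg at hlt
    obtain ⟨C⟩ := hloc z
    -- colour function on V
    set col : V → Fin b := fun w =>
      if h : G.Adj z w then C ⟨w, h⟩ else ⟨0, by omega⟩ with hcoldef
    have hP : ∀ w w', G.Adj z w → G.Adj z w' → G.Adj w w' → col w ≠ col w' := by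
      intro w w' hw hw' hww
      simp only [hcoldef, dif_pos hw, dif_pos hw']
      exact C.valid hww
    have hinjOn : ∀ t : Finset V, (∀ w ∈ t, G.Adj z w) → ((t : Set V).Pairwise G.Adj) →
        Set.InjOn col ↑t := by
      intro t htz hcl w hw w' hw' heq
      by_contra hne
      exact hP w w' (htz w hw) (htz w' hw') (hcl hw hw' hne) heq
    have claim1 : ∀ t : Finset V, (∀ w ∈ t, G.Adj z w) → ((t : Set V).Pairwise G.Adj) →
        t.card ≤ b := by
      intro t htz hcl
      have h := Finset.card_le_card_of_injOn col
        (fun w _ => Finset.mem_univ (col w)) (hinjOn t htz hcl)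
      simpa using h
    have claim2 : ∀ t : Finset V, (∀ w ∈ t, G.Adj z w) → ((t : Set V).Pairwise G.Adj) →
        t.card = b - 1 → ∀ w w', G.Adj z w → G.Adj z w' →
        (∀ e ∈ t, G.Adj w e) → (∀ e ∈ t, G.Adj w' e) → col w = col w' := by
      intro t htz hcl hcard w w' hw hw' hwt hw't
      have hS : (t.image col).card = b - 1 := by
        rw [Finset.card_image_of_injOn (hinjOn t htz hcl), hcard]
      have hwS : col w ∉ t.image col := by
        rw [Finset.mem_image]
        rintro ⟨e, he, heq⟩
        exact hP w e hw (htz e he) (hwt e he) heq.symm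
      have hw'S : col w' ∉ t.image col := by
        rw [Finset.mem_image]
        rintro ⟨e, he, heq⟩
        exact hP w' e hw' (htz e he) (hw't e he) heq.symm
      have hcompl : (t.image col)ᶜ.card ≤ 1 := by
        rw [Finset.card_compl, hS]
        simp only [Fintype.card_fin]
        omega
      exact Finset.card_le_one.mp hcompl _ (Finset.mem_compl.mpr hwS)
        _ (Finset.mem_compl.mpr hw'S)
    -- A vertex adjacent to all of a b-clique together with a common "apex" is impossible.
    have bigc : ∀ s : Finset V, s.card = b → ((s : Set V).Pairwise G.Adj) →
        ∀ p, p ∉ s → (∀ x ∈ s, G.Adj p x) → G.Adj z p → (∀ w ∈ s, G.Adj z w) → False := by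
      intro s hcard hcl p hps hpx hzp hall
      have hins : ((insert p s : Finset V) : Set V).Pairwise G.Adj := by
        rw [Finset.coe_insert]
        haveI : Std.Symm G.Adj := G.symm
        rw [Set.pairwise_insert_of_symmetric]
        exact ⟨hcl, fun x hx _ => hpx x hx⟩
      have h := claim1 (insert p s) ?_ hins
      · rw [Finset.card_insert_of_notMem hps, hcard] at h
        omega
      · intro w hw
        rcases Finset.mem_insert.mp hw with rfl | hw
        · exact hzp
        · exact hall w hw
    have hconv₁ : (∑ w ∈ s₁, if G.Adj z w then 0 else 1)
        = (s₁.filter fun w => ¬ G.Adj z w).card := by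
      rw [Finset.card_filter]
      exact Finset.sum_congr rfl fun w _ => by by_cases h : G.Adj z w <;> simp [h]
    have hconv₂ : (∑ w ∈ s₂, if G.Adj z w then 0 else 1)
        = (s₂.filter fun w => ¬ G.Adj z w).card := by
      rw [Finset.card_filter]
      exact Finset.sum_congr rfl fun w _ => by by_cases h : G.Adj z w <;> simp [h]
    rw [hconv₁, hconv₂] at hlt
    have hall₁ : (s₁.filter fun w => ¬ G.Adj z w).card = 0 → ∀ w ∈ s₁, G.Adj z w := by
      intro h0 w hw
      by_contra hcon
      have hmem : w ∈ s₁.filter fun w => ¬ G.Adj z w := Finset.mem_filter.mpr ⟨hw, hcon⟩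
      rw [Finset.card_eq_zero.mp h0] at hmem
      exact absurd hmem (Finset.notMem_empty w)
    have hall₂ : (s₂.filter fun w => ¬ G.Adj z w).card = 0 → ∀ w ∈ s₂, G.Adj z w := by
      intro h0 w hw
      by_contra hcon
      have hmem : w ∈ s₂.filter fun w => ¬ G.Adj z w := Finset.mem_filter.mpr ⟨hw, hcon⟩
      rw [Finset.card_eq_zero.mp h0] at hmem
      exact absurd hmem (Finset.notMem_empty w)
    have e1 : G.Adj z u₁ → (s₁.filter fun w => ¬ G.Adj z w).card ≠ 0 := fun h h0 =>
      bigc s₁ hc₁.2 hc₁.1 u₁ hu₁s₁ (fun x hx => (ha₁ x hx).1) h (hall₁ h0)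
    have e2 : G.Adj z v → (s₁.filter fun w => ¬ G.Adj z w).card ≠ 0 := fun h h0 =>
      bigc s₁ hc₁.2 hc₁.1 v hvs₁ (fun x hx => (ha₁ x hx).2) h (hall₁ h0)
    have e3 : G.Adj z u₂ → (s₂.filter fun w => ¬ G.Adj z w).card ≠ 0 := fun h h0 =>
      bigc s₂ hc₂.2 hc₂.1 u₂ hu₂s₂ (fun x hx => (ha₂ x hx).1) h (hall₂ h0)
    have e4 : G.Adj z v → (s₂.filter fun w => ¬ G.Adj z w).card ≠ 0 := fun h h0 =>
      bigc s₂ hc₂.2 hc₂.1 v hvs₂ (fun x hx => (ha₂ x hx).2) h (hall₂ h0)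
    by_cases hz1 : G.Adj z u₁ <;> by_cases hz2 : G.Adj z u₂ <;> by_cases hzv : G.Adj z v <;>
      simp only [hz1, hz2, hzv, if_true, if_false] at hlt
    case pos =>
      -- z adjacent to u₁, u₂, v : the main colouring contradiction
      have ha' : (s₁.filter fun w => ¬ G.Adj z w).card = 1 := by
        have := e2 hzv; have := e4 hzv; omega
      have hc' : (s₂.filter fun w => ¬ G.Adj z w).card = 1 := by
        have := e2 hzv; have := e4 hzv; omega
      obtain ⟨x, hx⟩ := Finset.card_eq_one.mp ha'
      obtain ⟨y, hy⟩ := Finset.card_eq_one.mp hc'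
      have hxs : x ∈ s₁ := by
        have : x ∈ s₁.filter fun w => ¬ G.Adj z w := by rw [hx]; exact Finset.mem_singleton_self x
        exact (Finset.mem_filter.mp this).1
      have hys : y ∈ s₂ := by
        have : y ∈ s₂.filter fun w => ¬ G.Adj z w := by rw [hy]; exact Finset.mem_singleton_self y
        exact (Finset.mem_filter.mp this).1
      have hallx : ∀ w ∈ s₁.erase x, G.Adj z w := by
        intro w hw
        obtain ⟨hne, hws⟩ := Finset.mem_erase.mp hw
        by_contra hcon
        have hmem : w ∈ s₁.filter fun w => ¬ G.Adj z w := Finset.mem_filter.mpr ⟨hws, hcon⟩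
        rw [hx] at hmem
        exact hne (Finset.mem_singleton.mp hmem)
      have hally : ∀ w ∈ s₂.erase y, G.Adj z w := by
        intro w hw
        obtain ⟨hne, hws⟩ := Finset.mem_erase.mp hw
        by_contra hcon
        have hmem : w ∈ s₂.filter fun w => ¬ G.Adj z w := Finset.mem_filter.mpr ⟨hws, hcon⟩
        rw [hy] at hmem
        exact hne (Finset.mem_singleton.mp hmem)
      have hclx : ((s₁.erase x : Finset V) : Set V).Pairwise G.Adj :=
        hc₁.1.subset (Finset.coe_subset.mpr (Finset.erase_subset x s₁))
      have hcly : ((s₂.erase y : Finset V) : Set V).Pairwise G.Adj :=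
        hc₂.1.subset (Finset.coe_subset.mpr (Finset.erase_subset y s₂))
      have hcardx : (s₁.erase x).card = b - 1 := by
        rw [Finset.card_erase_of_mem hxs, hc₁.2]
      have hcardy : (s₂.erase y).card = b - 1 := by
        rw [Finset.card_erase_of_mem hys, hc₂.2]
      have q1 : col u₁ = col v :=
        claim2 (s₁.erase x) hallx hclx hcardx u₁ v hz1 hzv
          (fun e he => (ha₁ e (Finset.mem_of_mem_erase he)).1)
          (fun e he => (ha₁ e (Finset.mem_of_mem_erase he)).2)
      have q2 : col u₂ = col v :=
        claim2 (s₂.erase y) hally hcly hcardy u₂ v hz2 hzv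
          (fun e he => (ha₂ e (Finset.mem_of_mem_erase he)).1)
          (fun e he => (ha₂ e (Finset.mem_of_mem_erase he)).2)
      exact hP u₁ u₂ hz1 hz2 hadj (q1.trans q2.symm)
    all_goals first
      | (have := e1 hz1; have := e3 hz2; omega)
      | (have := e1 hz1; have := e4 hzv; omega)
      | (have := e1 hz1; omega)
      | (have := e2 hzv; have := e3 hz2; omega)
      | (have := e3 hz2; omega)
      | (have := e2 hzv; have := e4 hzv; omega)
      | omega
  -- Counting
  haveI : Nonempty V := ⟨v⟩
  set n := Fintype.card V with hn
  set δ := G.minDegree with hδdef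
  have colsum : ∀ w : V, (∑ z : V, if G.Adj z w then 0 else 1) + G.degree w = n := by
    intro w
    have h1 : (∑ z : V, if G.Adj z w then 0 else 1)
        = (Finset.univ.filter fun z => ¬ G.Adj z w).card := by
      rw [Finset.card_filter]
      exact Finset.sum_congr rfl fun z _ => by by_cases h : G.Adj z w <;> simp [h]
    have h2 : G.degree w = (Finset.univ.filter fun z => G.Adj z w).card := by
      rw [SimpleGraph.degree]
      congr 1
      ext z
      simp [SimpleGraph.mem_neighborFinset, G.adj_comm]
    rw [h1, h2, add_comm]
    exact Finset.card_filter_add_card_filter_not _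
  have hsum : 3 * n + ((2 * b + 3) * δ) ≤ (2 * b + 3) * n := by
    have h1 : 3 * n ≤ ∑ z : V,
        ((∑ w ∈ s₁, if G.Adj z w then 0 else 1) + (∑ w ∈ s₂, if G.Adj z w then 0 else 1)
        + ((if G.Adj z u₁ then 0 else 1) + (if G.Adj z u₂ then 0 else 1)
        + (if G.Adj z v then 0 else 1))) := by
      calc 3 * n = ∑ _z : V, 3 := by
            rw [Finset.sum_const, smul_eq_mul, Finset.card_univ, ← hn, mul_comm]
        _ ≤ _ := Finset.sum_le_sum fun z _ => key z
    -- swap sums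
    have hswap : (∑ z : V,
        ((∑ w ∈ s₁, if G.Adj z w then 0 else 1) + (∑ w ∈ s₂, if G.Adj z w then 0 else 1)
        + ((if G.Adj z u₁ then 0 else 1) + (if G.Adj z u₂ then 0 else 1)
        + (if G.Adj z v then 0 else 1))))
        = (∑ w ∈ s₁, ∑ z : V, if G.Adj z w then 0 else 1)
          + (∑ w ∈ s₂, ∑ z : V, if G.Adj z w then 0 else 1)
          + ((∑ z : V, if G.Adj z u₁ then 0 else 1) + (∑ z : V, if G.Adj z u₂ then 0 else 1)
          + (∑ z : V, if G.Adj z v then 0 else 1)) := by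
      rw [Finset.sum_add_distrib, Finset.sum_add_distrib, Finset.sum_add_distrib,
        Finset.sum_add_distrib, Finset.sum_comm (s := Finset.univ) (t := s₁),
        Finset.sum_comm (s := Finset.univ) (t := s₂)]
    have hdeg1 : (∑ w ∈ s₁, ∑ z : V, if G.Adj z w then 0 else 1) + (∑ w ∈ s₁, G.degree w)
        = b * n := by
      rw [← Finset.sum_add_distrib]
      calc (∑ w ∈ s₁, ((∑ z : V, if G.Adj z w then 0 else 1) + G.degree w))
          = ∑ _w ∈ s₁, n := Finset.sum_congr rfl fun w _ => colsum w
        _ = b * n := by rw [Finset.sum_const, smul_eq_mul, hc₁.2]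
    have hdeg2 : (∑ w ∈ s₂, ∑ z : V, if G.Adj z w then 0 else 1) + (∑ w ∈ s₂, G.degree w)
        = b * n := by
      rw [← Finset.sum_add_distrib]
      calc (∑ w ∈ s₂, ((∑ z : V, if G.Adj z w then 0 else 1) + G.degree w))
          = ∑ _w ∈ s₂, n := Finset.sum_congr rfl fun w _ => colsum w
        _ = b * n := by rw [Finset.sum_const, smul_eq_mul, hc₂.2]
    have hmd1 : ∑ w ∈ s₁, G.degree w ≥ b * δ := by
      calc b * δ = s₁.card • δ := by rw [hc₁.2, smul_eq_mul]
        _ ≤ ∑ w ∈ s₁, G.degree w :=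
          Finset.card_nsmul_le_sum s₁ _ δ fun w _ => G.minDegree_le_degree w
    have hmd2 : ∑ w ∈ s₂, G.degree w ≥ b * δ := by
      calc b * δ = s₂.card • δ := by rw [hc₂.2, smul_eq_mul]
        _ ≤ ∑ w ∈ s₂, G.degree w :=
          Finset.card_nsmul_le_sum s₂ _ δ fun w _ => G.minDegree_le_degree w
    have hd1 := colsum u₁
    have hd2 := colsum u₂
    have hd3 := colsum v
    have hmd3 := G.minDegree_le_degree u₁
    have hmd4 := G.minDegree_le_degree u₂
    have hmd5 := G.minDegree_le_degree v
    rw [hswap] at h1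
    -- combine everything linearly
    nlinarith [h1, hdeg1, hdeg2, hmd1, hmd2, hd1, hd2, hd3, hmd3, hmd4, hmd5]
  -- Transfer to ℝ and contradict hδ
  have hcast : ((3 * n + (2 * b + 3) * δ : ℕ) : ℝ) ≤ (((2 * b + 3) * n : ℕ) : ℝ) :=
    Nat.cast_le.mpr hsum
  push_cast at hcast
  have hpos : (0 : ℝ) < 2 * (b : ℝ) + 3 := by positivity
  have hδ' : (2 * (b : ℝ)) * n < (2 * (b : ℝ) + 3) * δ := by
    rw [div_mul_eq_mul_div, div_lt_iff₀ hpos] at hδ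
    calc (2 * (b : ℝ)) * n = 2 * (b : ℝ) * n := by ring
      _ < (δ : ℝ) * (2 * (b : ℝ) + 3) := hδ
      _ = (2 * (b : ℝ) + 3) * δ := by ring
  nlinarith [hcast, hδ']
end

section
/- Let G be a locally bipartite graph (every neighbourhood is bipartite) that contains no copy of the Moser spindle H₀. Then for every vertex v of G, the set D_v = {u : u,v is a dense pair} is an independent set. -/
/-- The Moser spindle `H₀`: vertices `a₀,…,a₆` with edges
`a₀a₁, a₁a₂, a₂a₃, a₃a₄, a₄a₅, a₅a₆, a₆a₀, a₅a₀, a₀a₂, a₁a₃, a₄a₆`. -/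
def MoserSpindle : SimpleGraph (Fin 7) :=
  SimpleGraph.fromRel (fun i j => (i, j) ∈
    ([(0, 1), (1, 2), (2, 3), (3, 4), (4, 5), (5, 6), (6, 0), (5, 0), (0, 2), (1, 3), (4, 6)] :
      List (Fin 7 × Fin 7)))

/-- `G` contains a (not necessarily induced) copy of the Moser spindle. -/
def ContainsMoserSpindle {V : Type*} (G : SimpleGraph V) : Prop :=
  ∃ f : Fin 7 → V, Function.Injective f ∧
    ∀ i j, MoserSpindle.Adj i j → G.Adj (f i) (f j)

/-- A pair of vertices is *dense* if their common neighbourhood contains an edge. -/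
def DensePair {V : Type*} (G : SimpleGraph V) (u v : V) : Prop :=
  ∃ x y, G.Adj u x ∧ G.Adj v x ∧ G.Adj u y ∧ G.Adj v y ∧ G.Adj x y

set_option maxRecDepth 10000

private lemma fin2_trans : ∀ x y z : Fin 2, x ≠ y → y ≠ z → x = z := by decide

private lemma no_tri {V : Type*} (G : SimpleGraph V) (w a b c : V)
    (h : (G.induce (G.neighborSet w)).Colorable 2)
    (hwa : G.Adj w a) (hwb : G.Adj w b) (hwc : G.Adj w c)
    (hab : G.Adj a b) (hbc : G.Adj b c) (hca : G.Adj c a) : False := by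
  obtain ⟨col⟩ := h
  have h1 : col ⟨a, hwa⟩ ≠ col ⟨b, hwb⟩ := col.valid (by simpa using hab)
  have h2 : col ⟨b, hwb⟩ ≠ col ⟨c, hwc⟩ := col.valid (by simpa using hbc)
  have h3 : col ⟨c, hwc⟩ ≠ col ⟨a, hwa⟩ := col.valid (by simpa using hca)
  exact h3 (fin2_trans _ _ _ h1 h2).symm

private lemma no_c5 {V : Type*} (G : SimpleGraph V) (w a b c d e : V)
    (h : (G.induce (G.neighborSet w)).Colorable 2)
    (hwa : G.Adj w a) (hwb : G.Adj w b) (hwc : G.Adj w c)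
    (hwd : G.Adj w d) (hwe : G.Adj w e)
    (hab : G.Adj a b) (hbc : G.Adj b c) (hcd : G.Adj c d)
    (hde : G.Adj d e) (hea : G.Adj e a) : False := by
  obtain ⟨col⟩ := h
  have h1 : col ⟨a, hwa⟩ ≠ col ⟨b, hwb⟩ := col.valid (by simpa using hab)
  have h2 : col ⟨b, hwb⟩ ≠ col ⟨c, hwc⟩ := col.valid (by simpa using hbc)
  have h3 : col ⟨c, hwc⟩ ≠ col ⟨d, hwd⟩ := col.valid (by simpa using hcd)
  have h4 : col ⟨d, hwd⟩ ≠ col ⟨e, hwe⟩ := col.valid (by simpa using hde)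
  have h5 : col ⟨e, hwe⟩ ≠ col ⟨a, hwa⟩ := col.valid (by simpa using hea)
  have e1 := fin2_trans _ _ _ h1 h2
  have e2 := fin2_trans _ _ _ h3 h4
  exact h5 (e1.trans e2).symm

/-- In a locally bipartite graph containing no copy of the Moser spindle
`H₀`, for every vertex `v` the set `D_v` of vertices forming a dense pair with `v` is an
independent set. -/
theorem stmt_8 {V : Type*} [Fintype V] (G : SimpleGraph V)
    (hloc : ∀ v : V, (G.induce (G.neighborSet v)).Colorable 2)
    (hH0 : ¬ ContainsMoserSpindle G) (v : V) :
    ∀ u₁ u₂, DensePair G u₁ v → DensePair G u₂ v → ¬ G.Adj u₁ u₂ := by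
  intro u₁ u₂ hd1 hd2 hadj
  obtain ⟨x₁, y₁, h1x, hvx1, h1y, hvy1, hxy1⟩ := hd1
  obtain ⟨x₂, y₂, h2x, hvx2, h2y, hvy2, hxy2⟩ := hd2
  by_cases h1v : G.Adj v u₁
  · exact no_tri G v u₁ x₁ y₁ (hloc v) h1v hvx1 hvy1 h1x hxy1 h1y.symm
  by_cases h2v : G.Adj v u₂
  · exact no_tri G v u₂ x₂ y₂ (hloc v) h2v hvx2 hvy2 h2x hxy2 h2y.symm
  -- coincidence cases: shared vertex gives a C5 in its neighbourhood
  by_cases e1 : x₁ = x₂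
  · subst e1
    exact no_c5 G x₁ u₁ y₁ v y₂ u₂ (hloc x₁) h1x.symm hxy1 hvx1.symm hxy2 h2x.symm
      h1y hvy1.symm hvy2 h2y.symm hadj.symm
  by_cases e2 : x₁ = y₂
  · subst e2
    exact no_c5 G x₁ u₁ y₁ v x₂ u₂ (hloc x₁) h1x.symm hxy1 hvx1.symm hxy2.symm h2y.symm
      h1y hvy1.symm hvx2 h2x.symm hadj.symm
  by_cases e3 : y₁ = x₂
  · subst e3
    exact no_c5 G y₁ u₁ x₁ v y₂ u₂ (hloc y₁) h1y.symm hxy1.symm hvy1.symm hxy2 h2x.symm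
      h1x hvx1.symm hvy2 h2y.symm hadj.symm
  by_cases e4 : y₁ = y₂
  · subst e4
    exact no_c5 G y₁ u₁ x₁ v x₂ u₂ (hloc y₁) h1y.symm hxy1.symm hvy1.symm hxy2.symm h2y.symm
      h1x hvx1.symm hvx2 h2x.symm hadj.symm
  -- all seven vertices distinct: build a Moser spindle
  apply hH0
  have d1 : u₁ ≠ v := fun h => h2v (h ▸ hadj)
  have d2 : u₂ ≠ v := fun h => h1v (h ▸ hadj.symm)
  have d3 : u₁ ≠ x₂ := fun h => h1v (h ▸ hvx2)
  have d4 : u₁ ≠ y₂ := fun h => h1v (h ▸ hvy2)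
  have d5 : u₂ ≠ x₁ := fun h => h2v (h ▸ hvx1)
  have d6 : u₂ ≠ y₁ := fun h => h2v (h ▸ hvy1)
  refine ⟨![v, x₁, y₁, u₁, u₂, x₂, y₂], ?_, ?_⟩
  · intro i j hij
    have n1 := hvx1.ne; have n2 := hvy1.ne; have n3 := hvx2.ne; have n4 := hvy2.ne
    have n5 := hxy1.ne; have n6 := hxy2.ne; have n7 := h1x.ne; have n8 := h1y.ne
    have n9 := h2x.ne; have n10 := h2y.ne; have n11 := hadj.ne
    fin_cases i <;> fin_cases j <;>
      first
        | rfl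
        | exact absurd hij n1 | exact absurd hij n2 | exact absurd hij n3 | exact absurd hij n4 | exact absurd hij n5 | exact absurd hij n6 | exact absurd hij n7 | exact absurd hij n8 | exact absurd hij n9 | exact absurd hij n10 | exact absurd hij n11 | exact absurd hij d1 | exact absurd hij d2 | exact absurd hij d3 | exact absurd hij d4 | exact absurd hij d5 | exact absurd hij d6 | exact absurd hij e1 | exact absurd hij e2 | exact absurd hij e3 | exact absurd hij e4 | exact absurd hij.symm n1 | exact absurd hij.symm n2 | exact absurd hij.symm n3 | exact absurd hij.symm n4 | exact absurd hij.symm n5 | exact absurd hij.symm n6 | exact absurd hij.symm n7 | exact absurd hij.symm n8 | exact absurd hij.symm n9 | exact absurd hij.symm n10 | exact absurd hij.symm n11 | exact absurd hij.symm d1 | exact absurd hij.symm d2 | exact absurd hij.symm d3 | exact absurd hij.symm d4 | exact absurd hij.symm d5 | exact absurd hij.symm d6 | exact absurd hij.symm e1 | exact absurd hij.symm e2 | exact absurd hij.symm e3 | exact absurd hij.symm e4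
  · intro i j hij
    fin_cases i <;> fin_cases j <;>
      first
        | (exfalso; revert hij; simp only [MoserSpindle, SimpleGraph.fromRel_adj]; decide)
        | exact hvx1 | exact hvy1 | exact hvx2 | exact hvy2
        | exact hvx1.symm | exact hvy1.symm | exact hvx2.symm | exact hvy2.symm
        | exact hxy1 | exact hxy1.symm | exact hxy2 | exact hxy2.symm
        | exact h1x | exact h1x.symm | exact h1y | exact h1y.symm
        | exact h2x | exact h2x.symm | exact h2y | exact h2y.symm
        | exact hadj | exact hadj.symm
end

section
/- Let b ≥ 2 be an integer and G a finite simple graph with δ(G) > (1 − 1/b)·|G|. If C = v₁v₂v₃v₄ is an induced 4-cycle in G and there exists a (b−2)-clique K all of whose vertices are adjacent to all four vertices of C, then at least one of the non-edge pairs {v₁,v₃}, {v₂,v₄} is b-dense (its common neighbourhood contains a b-clique). -/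
private lemma bdense_aux {V : Type*} [DecidableEq V] (G : SimpleGraph V) (b : ℕ) (hb : 2 ≤ b)
    (K : Finset V) (hK : G.IsNClique (b - 2) K) (u w y x : V)
    (hKu : ∀ k ∈ K, G.Adj k u) (hKw : ∀ k ∈ K, G.Adj k w)
    (hKy : ∀ k ∈ K, G.Adj k y) (hyu : G.Adj u y) (hyw : G.Adj w y)
    (hxK : ∀ k ∈ K, G.Adj x k) (hxy : G.Adj x y) (hxu : G.Adj u x) (hxw : G.Adj w x) :
    BDense G b u w := by
  refine ⟨insert x (insert y K), ?_, ?_⟩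
  · have h1 : G.IsNClique (b - 2 + 1) (insert y K) :=
      hK.insert (fun k hk => (hKy k hk).symm)
    have h2 : G.IsNClique (b - 2 + 1 + 1) (insert x (insert y K)) := by
      refine h1.insert ?_
      intro z hz
      rcases Finset.mem_insert.mp hz with rfl | hz
      · exact hxy
      · exact hxK z hz
    have hbb : b - 2 + 1 + 1 = b := by omega
    rwa [hbb] at h2
  · intro z hz
    rcases Finset.mem_insert.mp hz with rfl | hz
    · exact ⟨hxu, hxw⟩
    rcases Finset.mem_insert.mp hz with rfl | hz
    · exact ⟨hyu, hyw⟩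
    · exact ⟨(hKu z hz).symm, (hKw z hz).symm⟩

/-- Let `b ≥ 2` and `δ(G) > (1 − 1/b)·|G|`. If `v₁v₂v₃v₄` is an induced
4-cycle of `G` and `K` is a `(b−2)`-clique all of whose vertices are adjacent to all four
vertices of the cycle, then one of the pairs `{v₁,v₃}`, `{v₂,v₄}` is `b`-dense. -/
theorem stmt_9 {V : Type*} [Fintype V] (G : SimpleGraph V) [DecidableRel G.Adj]
    (b : ℕ) (hb : 2 ≤ b)
    (hδ : (1 - 1 / (b : ℝ)) * (Fintype.card V : ℝ) < (G.minDegree : ℝ))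
    (v₁ v₂ v₃ v₄ : V) (h12 : G.Adj v₁ v₂) (h23 : G.Adj v₂ v₃) (h34 : G.Adj v₃ v₄)
    (h41 : G.Adj v₄ v₁) (hne13 : v₁ ≠ v₃) (hne24 : v₂ ≠ v₄)
    (h13 : ¬ G.Adj v₁ v₃) (h24 : ¬ G.Adj v₂ v₄)
    (K : Finset V) (hK : G.IsNClique (b - 2) K)
    (hKC : ∀ x ∈ K, G.Adj x v₁ ∧ G.Adj x v₂ ∧ G.Adj x v₃ ∧ G.Adj x v₄) :
    BDense G b v₁ v₃ ∨ BDense G b v₂ v₄ := by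
  classical
  by_contra hcon
  push_neg at hcon
  obtain ⟨hn13, hn24⟩ := hcon
  set n := Fintype.card V with hn
  set d := G.minDegree with hd
  -- distinctness facts
  have d12 : v₁ ≠ v₂ := h12.ne
  have d14 : v₁ ≠ v₄ := h41.ne'
  have d23 : v₂ ≠ v₃ := h23.ne
  have d34 : v₃ ≠ v₄ := h34.ne
  -- the 4-cycle as a finset
  set C4 : Finset V := {v₁, v₂, v₃, v₄} with hC4
  have hC4card : C4.card = 4 := by
    rw [hC4]
    rw [Finset.card_insert_of_notMem (by simp [hne13, d12, d14]),
        Finset.card_insert_of_notMem (by simp [d23, hne24]),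
        Finset.card_insert_of_notMem (by simp [d34]),
        Finset.card_singleton]
  -- non-neighbourhoods
  set Nf : V → Finset V := fun a => Finset.univ.filter (fun x => ¬ G.Adj a x) with hNf
  have hNfcard : ∀ a : V, (Nf a).card + G.degree a = n := by
    intro a
    have hdeg : (Finset.univ.filter (fun x => G.Adj a x)).card = G.degree a := by
      rw [SimpleGraph.degree]
      congr 1
      ext x
      simp
    have key := Finset.card_filter_add_card_filter_not
      (s := (Finset.univ : Finset V)) (p := fun x => G.Adj a x)
    rw [Finset.card_univ] at key
    simp only [hNf]
    omega
  have hNfle : ∀ a : V, (Nf a).card ≤ n - d := by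
    intro a
    have h1 := hNfcard a
    have h2 : d ≤ G.degree a := G.minDegree_le_degree a
    omega
  -- vertices adjacent to all of K
  set M : Finset V := Finset.univ.filter (fun x => ∀ k ∈ K, G.Adj x k) with hM
  -- key case analysis: every x ∈ M misses at least two vertices of C4
  have hcase : ∀ x ∈ M, ∃ a c : V, a ∈ C4 ∧ c ∈ C4 ∧ a ≠ c ∧ ¬ G.Adj a x ∧ ¬ G.Adj c x := by
    intro x hx
    have hxK : ∀ k ∈ K, G.Adj x k := (Finset.mem_filter.mp hx).2
    have L1 : G.Adj v₂ x → G.Adj v₃ x → G.Adj v₄ x → False := by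
      intro h2 h3 h4
      exact hn24 (bdense_aux G b hb K hK v₂ v₄ v₃ x
        (fun k hk => (hKC k hk).2.1) (fun k hk => (hKC k hk).2.2.2)
        (fun k hk => (hKC k hk).2.2.1) h23 h34.symm hxK h3.symm h2 h4)
    have L2 : G.Adj v₁ x → G.Adj v₃ x → G.Adj v₄ x → False := by
      intro h1 h3 h4
      exact hn13 (bdense_aux G b hb K hK v₁ v₃ v₄ x
        (fun k hk => (hKC k hk).1) (fun k hk => (hKC k hk).2.2.1)
        (fun k hk => (hKC k hk).2.2.2) h41.symm h34 hxK h4.symm h1 h3)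
    have L3 : G.Adj v₁ x → G.Adj v₂ x → G.Adj v₄ x → False := by
      intro h1 h2 h4
      exact hn24 (bdense_aux G b hb K hK v₂ v₄ v₁ x
        (fun k hk => (hKC k hk).2.1) (fun k hk => (hKC k hk).2.2.2)
        (fun k hk => (hKC k hk).1) h12.symm h41 hxK h1.symm h2 h4)
    have L4 : G.Adj v₁ x → G.Adj v₂ x → G.Adj v₃ x → False := by
      intro h1 h2 h3
      exact hn13 (bdense_aux G b hb K hK v₁ v₃ v₂ x
        (fun k hk => (hKC k hk).1) (fun k hk => (hKC k hk).2.2.1)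
        (fun k hk => (hKC k hk).2.1) h12 h23.symm hxK h2.symm h1 h3)
    have m1 : v₁ ∈ C4 := by simp [hC4]
    have m2 : v₂ ∈ C4 := by simp [hC4]
    have m3 : v₃ ∈ C4 := by simp [hC4]
    have m4 : v₄ ∈ C4 := by simp [hC4]
    by_cases h1 : G.Adj v₁ x <;> by_cases h2 : G.Adj v₂ x <;>
      by_cases h3 : G.Adj v₃ x <;> by_cases h4 : G.Adj v₄ x <;>
      first
      | exact absurd (L1 h2 h3 h4) (fun h => h)
      | exact absurd (L2 h1 h3 h4) (fun h => h)
      | exact absurd (L3 h1 h2 h4) (fun h => h)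
      | exact absurd (L4 h1 h2 h3) (fun h => h)
      | exact ⟨v₁, v₂, m1, m2, d12, h1, h2⟩
      | exact ⟨v₁, v₃, m1, m3, hne13, h1, h3⟩
      | exact ⟨v₁, v₄, m1, m4, d14, h1, h4⟩
      | exact ⟨v₂, v₃, m2, m3, d23, h2, h3⟩
      | exact ⟨v₂, v₄, m2, m4, hne24, h2, h4⟩
      | exact ⟨v₃, v₄, m3, m4, d34, h3, h4⟩
  -- Claim 1: n ≤ |M| + ∑_{k∈K} |Nf k|
  have claim1 : n ≤ M.card + ∑ k ∈ K, (Nf k).card := by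
    have hsub : (Finset.univ : Finset V) ⊆ M ∪ K.biUnion Nf := by
      intro x _
      by_cases h : ∀ k ∈ K, G.Adj x k
      · exact Finset.mem_union_left _ (Finset.mem_filter.mpr ⟨Finset.mem_univ x, h⟩)
      · push_neg at h
        obtain ⟨k, hk, hnk⟩ := h
        refine Finset.mem_union_right _ (Finset.mem_biUnion.mpr ⟨k, hk, ?_⟩)
        exact Finset.mem_filter.mpr ⟨Finset.mem_univ x, fun h' => hnk h'.symm⟩
    calc n = (Finset.univ : Finset V).card := by rw [Finset.card_univ]
      _ ≤ (M ∪ K.biUnion Nf).card := Finset.card_le_card hsub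
      _ ≤ M.card + (K.biUnion Nf).card := Finset.card_union_le _ _
      _ ≤ M.card + ∑ k ∈ K, (Nf k).card := by
          exact Nat.add_le_add_left (Finset.card_biUnion_le) _
  -- Claim 2: 2 * |M| ≤ ∑_{v∈C4} |Nf v|
  have claim2 : 2 * M.card ≤ ∑ v ∈ C4, (Nf v).card := by
    have hswap : ∑ v ∈ C4, (Nf v).card
        = ∑ x : V, (C4.filter (fun v => ¬ G.Adj v x)).card := by
      simp only [hNf, Finset.card_filter]
      exact Finset.sum_comm
    rw [hswap]
    have hstep : ∀ x ∈ M, 2 ≤ (C4.filter (fun v => ¬ G.Adj v x)).card := by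
      intro x hx
      obtain ⟨a, c, ha, hc, hac, hna, hnc⟩ := hcase x hx
      have hsub : ({a, c} : Finset V) ⊆ C4.filter (fun v => ¬ G.Adj v x) := by
        intro z hz
        rcases Finset.mem_insert.mp hz with rfl | hz
        · exact Finset.mem_filter.mpr ⟨ha, hna⟩
        · rw [Finset.mem_singleton.mp hz]
          exact Finset.mem_filter.mpr ⟨hc, hnc⟩
      calc 2 = ({a, c} : Finset V).card := (Finset.card_pair hac).symm
        _ ≤ _ := Finset.card_le_card hsub
    calc 2 * M.card = ∑ _x ∈ M, 2 := by rw [Finset.sum_const, smul_eq_mul, mul_comm]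
      _ ≤ ∑ x ∈ M, (C4.filter (fun v => ¬ G.Adj v x)).card := Finset.sum_le_sum hstep
      _ ≤ ∑ x : V, (C4.filter (fun v => ¬ G.Adj v x)).card :=
          Finset.sum_le_sum_of_subset (Finset.subset_univ M)
  -- bound the sums
  have hKcard : K.card = b - 2 := hK.card_eq
  have hSK : ∑ k ∈ K, (Nf k).card ≤ (b - 2) * (n - d) := by
    calc ∑ k ∈ K, (Nf k).card ≤ K.card * (n - d) := by
          refine Finset.sum_le_card_nsmul K _ (n - d) ?_
          intro k _; exact hNfle k
      _ = (b - 2) * (n - d) := by rw [hKcard]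
    
  have hSC : ∑ v ∈ C4, (Nf v).card ≤ 4 * (n - d) := by
    calc ∑ v ∈ C4, (Nf v).card ≤ C4.card * (n - d) := by
          refine Finset.sum_le_card_nsmul C4 _ (n - d) ?_
          intro v _; exact hNfle v
      _ = 4 * (n - d) := by rw [hC4card]
  -- combine: n ≤ b * (n - d)
  have hmain : n ≤ b * (n - d) := by
    have h1 : 2 * n ≤ 2 * M.card + 2 * ((b - 2) * (n - d)) := by
      have := claim1
      omega
    have h2 : 2 * n ≤ 4 * (n - d) + 2 * ((b - 2) * (n - d)) := by
      have := le_trans claim2 hSC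
      omega
    have heq : 4 * (n - d) + 2 * ((b - 2) * (n - d)) = 2 * (b * (n - d)) := by
      have hbb : b - 2 + 2 = b := by omega
      calc 4 * (n - d) + 2 * ((b - 2) * (n - d)) = 2 * (((b - 2) + 2) * (n - d)) := by ring
        _ = 2 * (b * (n - d)) := by rw [hbb]
    rw [heq] at h2
    omega
  -- contradiction with the minimum degree hypothesis
  have hdn : d ≤ n := by
    calc d ≤ G.degree v₁ := G.minDegree_le_degree v₁
      _ ≤ n := by
        have h1 := hNfcard v₁
        omega
  have hcast : (n : ℝ) ≤ (b : ℝ) * ((n : ℝ) - (d : ℝ)) := by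
    have := hmain
    have h := Nat.cast_le (α := ℝ) |>.mpr hmain
    push_cast at h
    rwa [Nat.cast_sub hdn] at h
  have hb0 : (0 : ℝ) < (b : ℝ) := by positivity
  have hδ' : ((b : ℝ) - 1) * (n : ℝ) < (b : ℝ) * (d : ℝ) := by
    have := mul_lt_mul_of_pos_left hδ hb0
    have hbne : (b : ℝ) ≠ 0 := ne_of_gt hb0
    calc ((b : ℝ) - 1) * (n : ℝ) = (b : ℝ) * ((1 - 1 / (b : ℝ)) * (n : ℝ)) := by
          field_simp
      _ < (b : ℝ) * (d : ℝ) := this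
  nlinarith [hcast, hδ']
end

section
/- If H is a blow-up of a graph G (each vertex v of G replaced by a nonempty independent set I_v, with complete bipartite graphs between I_u and I_v exactly when uv ∈ E(G)), then G is a-locally b-partite if and only if H is a-locally b-partite. -/
/-- A graph `G` is *a-locally b-partite* if for every clique on `a` vertices, the induced
subgraph on the common neighbourhood of the clique is `b`-colourable. -/
def ALocallyBPartite {V : Type*} (G : SimpleGraph V) (a b : ℕ) : Prop :=
  ∀ s : Finset V, G.IsNClique a s →
    (G.induce {v | ∀ u ∈ s, G.Adj u v}).Colorable b

/-- Let `H` be the blow-up of `G` in which each vertex `v` is replaced by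
the nonempty independent set `I v` (so `H` lives on `Σ v, I v` and two vertices are adjacent
exactly when their underlying vertices of `G` are adjacent). Then `G` is `a`-locally
`b`-partite if and only if `H` is. -/
theorem stmt_12 {V : Type*} (G : SimpleGraph V) (I : V → Type*) (hI : ∀ v, Nonempty (I v))
    (a b : ℕ) :
    ALocallyBPartite G a b ↔
      ALocallyBPartite (G.comap (Sigma.fst : (Σ v, I v) → V)) a b := by
  classical
  constructor
  · intro h s hs
    have hinj : Set.InjOn (Sigma.fst : (Σ v, I v) → V) (s : Set (Σ v, I v)) := by
      intro x hx y hy hxy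
      by_contra hne
      exact (SimpleGraph.comap_adj.mp (hs.1 hx hy hne)).ne hxy
    have hclique : G.IsNClique a (s.image Sigma.fst) := by
      constructor
      · intro u hu v hv huv
        obtain ⟨x, hx, rfl⟩ := Finset.mem_image.mp hu
        obtain ⟨y, hy, rfl⟩ := Finset.mem_image.mp hv
        have hxy : x ≠ y := fun hh => huv (by rw [hh])
        exact hs.1 hx hy hxy
      · rw [Finset.card_image_of_injOn hinj, hs.2]
    obtain ⟨c⟩ := h _ hclique
    refine ⟨c.comp ⟨fun x => ⟨x.1.1, ?_⟩, ?_⟩⟩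
    · intro u hu
      obtain ⟨y, hy, rfl⟩ := Finset.mem_image.mp hu
      exact x.2 y hy
    · intro x y hxy
      exact hxy
  · intro h s hs
    set f : V → Σ v, I v := fun v => ⟨v, Classical.choice (hI v)⟩ with hf
    have hfinj : Function.Injective f := fun u v huv => congrArg Sigma.fst huv
    have hclique : (G.comap (Sigma.fst : (Σ v, I v) → V)).IsNClique a (s.image f) := by
      constructor
      · intro x hx y hy hxy
        obtain ⟨u, hu, rfl⟩ := Finset.mem_image.mp hx
        obtain ⟨v, hv, rfl⟩ := Finset.mem_image.mp hy
        exact hs.1 hu hv (fun hh => hxy (by rw [hh]))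
      · rw [Finset.card_image_of_injective _ hfinj, hs.2]
    obtain ⟨c⟩ := h _ hclique
    refine ⟨c.comp ⟨fun v => ⟨f v.1, ?_⟩, ?_⟩⟩
    · intro x hx
      obtain ⟨u, hu, rfl⟩ := Finset.mem_image.mp hx
      exact v.2 u hu
    · intro v w hvw
      exact hvw
end

section
/- The complement of the 7-cycle, C̄₇, is an edge-maximal locally bipartite graph: C̄₇ is locally bipartite, but adding any missing edge to C̄₇ creates a vertex whose neighbourhood contains an odd cycle. -/
/-- The complement `C̄₇` of the 7-cycle: vertex set `ZMod 7`, with `i ~ j` iff `i ≠ j` and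
`i − j ≢ ±1 (mod 7)` (equivalently `i − j ≡ ±2, ±3 (mod 7)`). -/
def C7bar : SimpleGraph (ZMod 7) where
  Adj i j := i ≠ j ∧ i - j ≠ 1 ∧ i - j ≠ -1
  symm := by
    constructor
    rintro i j ⟨h1, h2, h3⟩
    refine ⟨h1.symm, fun h => h3 ?_, fun h => h2 ?_⟩
    · rw [← neg_sub j i, h]
    · rw [← neg_sub j i, h, neg_neg]
  loopless := by constructor; rintro i ⟨h, -⟩; exact h rfl

instance : DecidableRel C7bar.Adj := fun i j =>
  inferInstanceAs (Decidable (i ≠ j ∧ i - j ≠ 1 ∧ i - j ≠ -1))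

lemma C7bar_key : ∀ v a b : ZMod 7, C7bar.Adj v a → C7bar.Adj v b → C7bar.Adj a b →
    ((a - v = 2 ∨ a - v = 3) ↔ ¬(b - v = 2 ∨ b - v = 3)) := by decide

lemma C7bar_adjC (i a b : ZMod 7) (h : a ≠ b ∧ a - b ≠ 1 ∧ a - b ≠ -1) :
    C7bar.Adj (i + a) (i + b) := by
  obtain ⟨h1, h2, h3⟩ := h
  exact ⟨fun he => h1 (add_left_cancel he), by simpa using h2, by simpa using h3⟩

lemma C7bar_main2 (i : ZMod 7) :
    ∃ (v w : ZMod 7) (q : (C7bar ⊔ SimpleGraph.fromEdgeSet {s(i, i+1)}).Walk w w),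
      q.IsCycle ∧ Odd q.length ∧
      ∀ x ∈ q.support, (C7bar ⊔ SimpleGraph.fromEdgeSet {s(i, i+1)}).Adj v x := by
  set G := C7bar ⊔ SimpleGraph.fromEdgeSet {s(i, i+1)} with hG
  have hne : ∀ a b : ZMod 7, a ≠ b → i + a ≠ i + b := fun a b h he => h (add_left_cancel he)
  have h1 : G.Adj i (i+1) := by
    refine Or.inr ⟨rfl, ?_⟩
    simpa using hne 0 1 (by decide)
  have h2 : G.Adj (i+1) (i+3) := Or.inl (C7bar_adjC i 1 3 (by decide))
  have h3 : G.Adj (i+3) i := by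
    have := C7bar_adjC i 3 0 (by decide)
    exact Or.inl (by simpa using this)
  refine ⟨i + 5, i, SimpleGraph.Walk.cons h1 (SimpleGraph.Walk.cons h2
    (SimpleGraph.Walk.cons h3 SimpleGraph.Walk.nil)), ?_, ?_, ?_⟩
  · constructor
    · constructor
      · simp [SimpleGraph.Walk.isTrail_def, Sym2.eq_iff]
        decide
      · simp
    · simp
      decide
  · simp
    decide
  · intro x hx
    simp [SimpleGraph.Walk.support] at hx
    have a0 : G.Adj (i + 5) i := by
      have := C7bar_adjC i 5 0 (by decide)
      exact Or.inl (by simpa using this)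
    have a1 : G.Adj (i + 5) (i + 1) := Or.inl (C7bar_adjC i 5 1 (by decide))
    have a3 : G.Adj (i + 5) (i + 3) := Or.inl (C7bar_adjC i 5 3 (by decide))
    rcases hx with h | h | h | h <;> rw [h] <;> assumption

/-- `C̄₇` is an edge-maximal locally bipartite graph: it is locally
bipartite, but adding any missing edge `ij` creates a vertex whose neighbourhood contains
an odd cycle. -/
theorem stmt_18 :
    (∀ v : ZMod 7, (C7bar.induce (C7bar.neighborSet v)).Colorable 2) ∧
    (∀ i j : ZMod 7, i ≠ j → ¬ C7bar.Adj i j →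
      ∃ (v w : ZMod 7) (q : (C7bar ⊔ SimpleGraph.fromEdgeSet {s(i, j)}).Walk w w),
        q.IsCycle ∧ Odd q.length ∧
        ∀ x ∈ q.support, (C7bar ⊔ SimpleGraph.fromEdgeSet {s(i, j)}).Adj v x) := by
  constructor
  · intro v
    refine ⟨SimpleGraph.Coloring.mk
      (fun x => if ((x : ZMod 7) - v = 2 ∨ (x : ZMod 7) - v = 3) then 0 else 1) ?_⟩
    rintro ⟨a, ha⟩ ⟨b, hb⟩ hadj
    have hab : C7bar.Adj a b := hadj
    have := C7bar_key v a b ha hb hab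
    by_cases h : (a - v = 2 ∨ a - v = 3) <;> by_cases h' : (b - v = 2 ∨ b - v = 3) <;>
      simp [h, h'] at this ⊢
  · intro i j hij hnadj
    have hd : i - j = 1 ∨ i - j = -1 := by
      by_contra h
      push_neg at h
      exact hnadj ⟨hij, h.1, h.2⟩
    rcases hd with hd | hd
    · have hj : i = j + 1 := by
        have := sub_eq_iff_eq_add.mp hd; linear_combination this
      have : s(i, j) = s(j, j + 1) := by rw [hj, Sym2.eq_swap]
      rw [this]
      exact C7bar_main2 j
    · have hj : j = i + 1 := by
        have := sub_eq_iff_eq_add.mp hd; linear_combination -this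
      rw [hj]
      exact C7bar_main2 i
end
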